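/- arXiv:2509.07384 — 2 statements merged into one kernel-verified Lean document; each statement's English description precedes it below -/
import Mathlib

section
/- For a scalar u_sat > 0 and scalar input u ∈ ℝ, the saturation σ(u) = sign(u)·min(u_sat, |u|) lies in the convex hull of {u, h} whenever |h| ≤ u_sat; that is, there exists ϱ ∈ [0,1] such that σ(u) = ϱ u + (1-ϱ) h, provided σ(u) lies between u and h. More precisely: if |h| ≤ u_sat, then σ(u) ∈ [min(u,h), max(u,h)]. -/
/-! Saturation at level `c ≥ 0` is the clamp of `u` to `[-c, c]`, and clamping `u` to an interval
containing `h` moves it towards `h` without passing it. -/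

theorem Real.sign_mul_min_abs_eq_max_neg_min {c : ℝ} (hc : 0 ≤ c) (u : ℝ) :
    Real.sign u * min c |u| = max (-c) (min c u) := by
  rcases lt_trichotomy u 0 with hu | rfl | hu
  · rw [Real.sign_of_neg hu, abs_of_neg hu, neg_one_mul, ← max_neg_neg, neg_neg,
      min_eq_right (hu.le.trans hc)]
  · simp [hc]
  · rw [Real.sign_of_pos hu, abs_of_pos hu, one_mul]
    exact (max_eq_right ((neg_nonpos.mpr hc).trans (le_min hc hu.le))).symm

theorem min_le_max_min_and_max_min_le_max {α : Type*} [LinearOrder α] {a b h : α}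
    (hh : h ∈ Set.Icc a b) (u : α) :
    min u h ≤ max a (min b u) ∧ max a (min b u) ≤ max u h :=
  ⟨le_max_of_le_right (le_min ((min_le_right u h).trans hh.2) (min_le_left u h)),
    max_le (hh.1.trans (le_max_right u h)) ((min_le_right b u).trans (le_max_left u h))⟩

theorem stmt_4_general (usat : ℝ) (u h : ℝ) (hh : |h| ≤ usat) :
    min u h ≤ Real.sign u * min usat |u| ∧ Real.sign u * min usat |u| ≤ max u h := by
  rw [Real.sign_mul_min_abs_eq_max_neg_min ((abs_nonneg h).trans hh)]
  exact min_le_max_min_and_max_min_le_max (abs_le.mp hh) u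

theorem stmt_4 (usat : ℝ) (husat : 0 < usat) (u h : ℝ) (hh : |h| ≤ usat) :
    min u h ≤ Real.sign u * min usat |u| ∧ Real.sign u * min usat |u| ≤ max u h :=
  stmt_4_general usat u h hh
end

section
/- One-step contraction implies exponential decay in the mean-square ISS sense: if ϱ₂ ξ_k ≤ V_k ≤ ϱ₃ ξ_k with 0 < ϱ₂ ≤ ϱ₃, ξ_k ≥ 0, and V_{k+1} - V_k ≤ -ϱ₁ ξ_k + c with 0 < ϱ₁ ≤ ϱ₃ and c ≥ 0, then ξ_k ≤ ψ₁(ξ_0, k) + ψ₂(c), where ψ₁(s,k) = (ϱ₃/ϱ₂)(1-ϱ₁/ϱ₃)^k s is of class 𝒦𝓛 (continuous, increasing to s in the first argument with ψ₁(0,k)=0, and decreasing to 0 in k for fixed s>0) and ψ₂(c) = c·ϱ₃/(ϱ₁ϱ₂) is of class 𝒦 (continuous, strictly increasing, ψ₂(0)=0). -/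
open Filter

/-- The class-𝒦𝓛 bounding function ψ₁(s,k) = (ϱ₃/ϱ₂)(1-ϱ₁/ϱ₃)^k s. -/
noncomputable def psi1 (r1 r2 r3 : ℝ) (s : ℝ) (k : ℕ) : ℝ :=
  (r3 / r2) * (1 - r1 / r3) ^ k * s

/-- The class-𝒦 bounding function ψ₂(c) = c·ϱ₃/(ϱ₁ϱ₂). -/
noncomputable def psi2 (r1 r2 r3 : ℝ) (c : ℝ) : ℝ :=
  c * r3 / (r1 * r2)

/-!
The sandwich `ϱ₂ ξ ≤ V ≤ ϱ₃ ξ` turns the decrease condition into the affine contraction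
`V (k + 1) ≤ q V k + c` with `q = 1 - ϱ₁/ϱ₃ ∈ [0, 1)`. Iterating it bounds `V k` by
`q ^ k V 0 + c / (1 - q)`, and the sandwich converts this back into a bound on `ξ k`.
-/

theorem le_pow_mul_add_div_of_le_mul_add {K : Type*} [Field K] [LinearOrder K]
    [IsStrictOrderedRing K] {u : ℕ → K} {q c : K} (hq0 : 0 ≤ q) (hq1 : q < 1) (hc : 0 ≤ c)
    (h : ∀ k, u (k + 1) ≤ q * u k + c) (k : ℕ) : u k ≤ q ^ k * u 0 + c / (1 - q) := by
  have hgap : 0 < 1 - q := sub_pos.2 hq1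
  induction k with
  | zero => simpa using div_nonneg hc hgap.le
  | succ k ih =>
    calc u (k + 1) ≤ q * u k + c := h k
      _ ≤ q * (q ^ k * u 0 + c / (1 - q)) + c := by gcongr
      _ = q ^ (k + 1) * u 0 + c / (1 - q) := by field_simp; ring

section Contraction

variable {r1 r2 r3 : ℝ}

theorem contraction_factor_nonneg (hr3 : 0 < r3) (hr13 : r1 ≤ r3) : 0 ≤ 1 - r1 / r3 :=
  sub_nonneg.2 ((div_le_one hr3).2 hr13)

theorem contraction_factor_lt_one (hr1 : 0 < r1) (hr3 : 0 < r3) : 1 - r1 / r3 < 1 :=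
  sub_lt_self 1 (div_pos hr1 hr3)

theorem lyapunov_succ_le {c : ℝ} {ξ V : ℕ → ℝ} (hr1 : 0 ≤ r1) (hr3 : 0 < r3)
    (hup : ∀ k, V k ≤ r3 * ξ k) (hdec : ∀ k, V (k + 1) ≤ V k - r1 * ξ k + c) (k : ℕ) :
    V (k + 1) ≤ (1 - r1 / r3) * V k + c := by
  have hscaled : r1 / r3 * V k ≤ r1 * ξ k := by
    calc r1 / r3 * V k ≤ r1 / r3 * (r3 * ξ k) := by gcongr; exact hup k
      _ = r1 * ξ k := by field_simp
  linarith [hdec k]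

theorem le_psi1_add_psi2 {c : ℝ} {ξ V : ℕ → ℝ} (hr1 : 0 < r1) (hr2 : 0 < r2) (hr3 : 0 < r3)
    (hr13 : r1 ≤ r3) (hc : 0 ≤ c) (hlow : ∀ k, r2 * ξ k ≤ V k) (hup : ∀ k, V k ≤ r3 * ξ k)
    (hdec : ∀ k, V (k + 1) ≤ V k - r1 * ξ k + c) (k : ℕ) :
    ξ k ≤ psi1 r1 r2 r3 (ξ 0) k + psi2 r1 r2 r3 c := by
  have hq0 := contraction_factor_nonneg hr3 hr13
  have hV := le_pow_mul_add_div_of_le_mul_add hq0 (contraction_factor_lt_one hr1 hr3) hc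
    (lyapunov_succ_le hr1.le hr3 hup hdec) k
  rw [sub_sub_cancel, div_div_eq_mul_div] at hV
  have hsandwich : r2 * ξ k ≤ r2 * (psi1 r1 r2 r3 (ξ 0) k + psi2 r1 r2 r3 c) :=
    calc r2 * ξ k ≤ V k := hlow k
      _ ≤ (1 - r1 / r3) ^ k * V 0 + c * r3 / r1 := hV
      _ ≤ (1 - r1 / r3) ^ k * (r3 * ξ 0) + c * r3 / r1 := by gcongr; exact hup 0
      _ = r2 * (psi1 r1 r2 r3 (ξ 0) k + psi2 r1 r2 r3 c) := by
        simp only [psi1, psi2]; field_simp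
  exact le_of_mul_le_mul_left hsandwich hr2

theorem continuous_psi1 (k : ℕ) : Continuous fun s => psi1 r1 r2 r3 s k :=
  continuous_const.mul continuous_id

theorem psi1_zero (k : ℕ) : psi1 r1 r2 r3 0 k = 0 :=
  mul_zero _

theorem monotone_psi1 (hr2 : 0 < r2) (hr3 : 0 < r3) (hr13 : r1 ≤ r3) (k : ℕ) :
    Monotone fun s => psi1 r1 r2 r3 s k :=
  fun _ _ hab => mul_le_mul_of_nonneg_left hab
    (mul_nonneg (div_pos hr3 hr2).le (pow_nonneg (contraction_factor_nonneg hr3 hr13) k))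

theorem antitone_psi1 (hr1 : 0 < r1) (hr2 : 0 < r2) (hr3 : 0 < r3) (hr13 : r1 ≤ r3) {s : ℝ}
    (hs : 0 ≤ s) : Antitone fun k => psi1 r1 r2 r3 s k := by
  have hanti : Antitone fun k : ℕ => (1 - r1 / r3) ^ k :=
    pow_right_anti₀ (contraction_factor_nonneg hr3 hr13) (contraction_factor_lt_one hr1 hr3).le
  exact fun _ _ hab =>
    mul_le_mul_of_nonneg_right (mul_le_mul_of_nonneg_left (hanti hab) (div_pos hr3 hr2).le) hs

theorem tendsto_psi1_atTop (hr1 : 0 < r1) (hr3 : 0 < r3) (hr13 : r1 ≤ r3) (s : ℝ) :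
    Tendsto (fun k => psi1 r1 r2 r3 s k) atTop (nhds 0) := by
  have hpow := tendsto_pow_atTop_nhds_zero_of_lt_one (contraction_factor_nonneg hr3 hr13)
    (contraction_factor_lt_one hr1 hr3)
  simpa [psi1] using (hpow.const_mul (r3 / r2)).mul_const s

theorem continuous_psi2 : Continuous (psi2 r1 r2 r3) :=
  (continuous_id.mul continuous_const).div_const _

theorem strictMono_psi2 (hr1 : 0 < r1) (hr2 : 0 < r2) (hr3 : 0 < r3) :
    StrictMono (psi2 r1 r2 r3) :=
  fun _ _ hab => div_lt_div_of_pos_right (mul_lt_mul_of_pos_right hab hr3) (mul_pos hr1 hr2)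

theorem psi2_zero : psi2 r1 r2 r3 0 = 0 := by
  simp [psi2]

end Contraction

theorem stmt_19_general (r1 r2 r3 c : ℝ) (hr1 : 0 < r1) (hr2 : 0 < r2) (hr3 : 0 < r3)
    (hr13 : r1 ≤ r3) (hc : 0 ≤ c)
    (ξ V : ℕ → ℝ)
    (hlow : ∀ k, r2 * ξ k ≤ V k) (hup : ∀ k, V k ≤ r3 * ξ k)
    (hdec : ∀ k, V (k + 1) ≤ V k - r1 * ξ k + c) :
    (∀ k, ξ k ≤ psi1 r1 r2 r3 (ξ 0) k + psi2 r1 r2 r3 c) ∧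
    -- ψ₁ has the class-𝒦𝓛 properties:
    (∀ k, Continuous (fun s => psi1 r1 r2 r3 s k)) ∧
    (∀ k, psi1 r1 r2 r3 0 k = 0) ∧
    (∀ k, Monotone (fun s => psi1 r1 r2 r3 s k)) ∧
    (∀ s : ℝ, 0 < s → Antitone (fun k => psi1 r1 r2 r3 s k)) ∧
    (∀ s : ℝ, 0 < s → Tendsto (fun k => psi1 r1 r2 r3 s k) atTop (nhds 0)) ∧
    -- ψ₂ has the class-𝒦 properties:
    Continuous (psi2 r1 r2 r3) ∧ StrictMono (psi2 r1 r2 r3) ∧ psi2 r1 r2 r3 0 = 0 :=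
  ⟨le_psi1_add_psi2 hr1 hr2 hr3 hr13 hc hlow hup hdec, continuous_psi1, psi1_zero,
    monotone_psi1 hr2 hr3 hr13, fun _ hs => antitone_psi1 hr1 hr2 hr3 hr13 hs.le,
    fun s _ => tendsto_psi1_atTop hr1 hr3 hr13 s, continuous_psi2, strictMono_psi2 hr1 hr2 hr3,
    psi2_zero⟩

theorem stmt_19 (r1 r2 r3 c : ℝ) (hr1 : 0 < r1) (hr2 : 0 < r2) (hr3 : 0 < r3)
    (hr13 : r1 ≤ r3) (hc : 0 ≤ c)
    (ξ V : ℕ → ℝ) (hξ : ∀ k, 0 ≤ ξ k)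
    (hlow : ∀ k, r2 * ξ k ≤ V k) (hup : ∀ k, V k ≤ r3 * ξ k)
    (hdec : ∀ k, V (k + 1) ≤ V k - r1 * ξ k + c) :
    (∀ k, ξ k ≤ psi1 r1 r2 r3 (ξ 0) k + psi2 r1 r2 r3 c) ∧
    -- ψ₁ has the class-𝒦𝓛 properties:
    (∀ k, Continuous (fun s => psi1 r1 r2 r3 s k)) ∧
    (∀ k, psi1 r1 r2 r3 0 k = 0) ∧
    (∀ k, Monotone (fun s => psi1 r1 r2 r3 s k)) ∧
    (∀ s : ℝ, 0 < s → Antitone (fun k => psi1 r1 r2 r3 s k)) ∧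
    (∀ s : ℝ, 0 < s → Tendsto (fun k => psi1 r1 r2 r3 s k) atTop (nhds 0)) ∧
    -- ψ₂ has the class-𝒦 properties:
    Continuous (psi2 r1 r2 r3) ∧ StrictMono (psi2 r1 r2 r3) ∧ psi2 r1 r2 r3 0 = 0 :=
  stmt_19_general r1 r2 r3 c hr1 hr2 hr3 hr13 hc ξ V hlow hup hdec
end
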